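/- arXiv:1911.02167 — 5 statements merged into one kernel-verified Lean document; each statement's English description precedes it below -/
import Mathlib

section
/- Let w_1=(1,0,0), w_2=(1/2,√3/2,0), w_3=w_2−w_1, w_4=(1/2,√3/6,√6/3), w_5=w_4−w_2, w_6=w_4−w_1 be the edge vectors of a regular unit tetrahedron. There exists a constant C_1 > 0 such that for every linear map A: ℝ³ → ℝ³ with det(A) > 0, dist²(A, SO(3)) := inf_{R∈SO(3)} |A − R|² ≤ C_1 · Σ_{i=1}^6 (|A w_i| − 1)², where |·| is the Frobenius norm on matrices and the Euclidean norm on vectors. -/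
/-- The special orthogonal group SO(3) as a set of matrices. -/
def SO3 : Set (Matrix (Fin 3) (Fin 3) ℝ) :=
  {R | R ∈ Matrix.orthogonalGroup (Fin 3) ℝ ∧ R.det = 1}

/-- Frobenius norm of a 3×3 matrix. -/
noncomputable def frob (A : Matrix (Fin 3) (Fin 3) ℝ) : ℝ :=
  Real.sqrt (∑ i, ∑ j, (A i j) ^ 2)

/-- Squared distance of a matrix to SO(3) in Frobenius norm. -/
noncomputable def dist2SO (A : Matrix (Fin 3) (Fin 3) ℝ) : ℝ :=
  sInf {t | ∃ R ∈ SO3, t = frob (A - R) ^ 2}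

/-- Euclidean norm on ℝ³. -/
noncomputable def enorm3 (v : Fin 3 → ℝ) : ℝ := Real.sqrt (∑ i, (v i) ^ 2)

/-- The six edge vectors of the regular unit tetrahedron. -/
noncomputable def w : Fin 6 → (Fin 3 → ℝ) :=
  ![![1, 0, 0],
    ![1/2, Real.sqrt 3 / 2, 0],
    ![1/2 - 1, Real.sqrt 3 / 2 - 0, 0 - 0],
    ![1/2, Real.sqrt 3 / 6, Real.sqrt 6 / 3],
    ![1/2 - 1/2, Real.sqrt 3 / 6 - Real.sqrt 3 / 2, Real.sqrt 6 / 3 - 0],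
    ![1/2 - 1, Real.sqrt 3 / 6 - 0, Real.sqrt 6 / 3 - 0]]


/-!
Since `det A > 0`, the polar decomposition `A = R S`, `S = √(AᵀA)`, has `R ∈ SO(3)`, and
`|A - R|² = |S - 1|² ≤ |AᵀA - 1|²`. The edge strains `|A wᵢ|² - 1 = wᵢ ⬝ (AᵀA - 1) wᵢ` determine
the symmetric matrix `AᵀA - 1`, and an explicit identity gives
`|AᵀA - 1|² ≤ 2 ∑ᵢ (|A wᵢ|² - 1)²`. As long as `|A|` is bounded, each `(|A wᵢ|² - 1)²` is at most a
constant times `(|A wᵢ| - 1)²`; for large `|A|` the comparison with `R = 1` suffices, because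
`∑ᵢ |A wᵢ|² = 2 |A|²`.
-/

open Matrix

section Frobenius

variable {m n : Type*} [Fintype m] [Fintype n]

def frobSq (A : Matrix m n ℝ) : ℝ := ∑ i, ∑ j, A i j ^ 2

lemma frobSq_nonneg (A : Matrix m n ℝ) : 0 ≤ frobSq A := by
  unfold frobSq; positivity

lemma frobSq_eq_trace (A : Matrix m n ℝ) : frobSq A = (Aᵀ * A).trace := by
  simp only [frobSq, trace, diag, mul_apply, transpose_apply, sq]
  exact Finset.sum_comm

lemma frobSq_sub_le (A B : Matrix m n ℝ) : frobSq (A - B) ≤ 2 * frobSq A + 2 * frobSq B := by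
  simp only [frobSq, Finset.mul_sum, ← Finset.sum_add_distrib, Matrix.sub_apply]
  gcongr with i _ j _
  nlinarith [sq_nonneg (A i j + B i j)]

lemma frobSq_one [DecidableEq n] : frobSq (1 : Matrix n n ℝ) = Fintype.card n := by
  simp [frobSq_eq_trace]

lemma frobSq_orthogonal_mul [DecidableEq m] {R : Matrix m m ℝ} (hR : R ∈ orthogonalGroup m ℝ)
    (B : Matrix m n ℝ) : frobSq (R * B) = frobSq B := by
  rw [frobSq_eq_trace, frobSq_eq_trace, transpose_mul, Matrix.mul_assoc, ← Matrix.mul_assoc Rᵀ,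
    (mem_orthogonalGroup_iff' m ℝ).1 hR, Matrix.one_mul]

end Frobenius

section Polar

variable {n : Type*} [Fintype n] [DecidableEq n]

lemma frobSq_sub_one_le_frobSq_mul_self_sub_one {S : Matrix n n ℝ} (hS : S.PosSemidef) :
    frobSq (S - 1) ≤ frobSq (S * S - 1) := by
  have hSt : Sᵀ = S := hS.1
  -- `(S * S - 1)² = (S - 1) (S + 1)² (S - 1)` and `(S + 1)² = 1 + (2 • S + S ^ 2)`
  have key : (S * S - 1)ᵀ * (S * S - 1) =
      (S - 1)ᵀ * (S - 1) + (S - 1)ᴴ * (2 • S + S ^ 2) * (S - 1) := by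
    simp only [conjTranspose_eq_transpose_of_trivial, transpose_sub, transpose_mul,
      transpose_one, hSt]
    noncomm_ring
  have hP : (2 • S + S ^ 2).PosSemidef := (hS.smul zero_le_two).add (hS.pow 2)
  rw [frobSq_eq_trace, frobSq_eq_trace, key, trace_add]
  linarith [(hP.conjTranspose_mul_mul_same (S - 1)).trace_nonneg]

open scoped MatrixOrder in
lemma exists_polar_decomposition {A : Matrix n n ℝ} (hA : 0 < A.det) :
    ∃ R ∈ specialOrthogonalGroup n ℝ, ∃ S : Matrix n n ℝ,
      S.PosSemidef ∧ S * S = Aᵀ * A ∧ A = R * S := by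
  set S := CFC.sqrt (Aᵀ * A)
  have hS : S.PosSemidef := (CFC.sqrt_nonneg _).posSemidef
  have hSS : S * S = Aᵀ * A :=
    CFC.sqrt_mul_sqrt_self _ (by simpa using (posSemidef_conjTranspose_mul_self A).nonneg)
  have hdetS : 0 < S.det := by
    have h2 : S.det * S.det = A.det * A.det := by rw [← det_mul, hSS, det_mul, det_transpose]
    nlinarith [hS.det_nonneg]
  have hSu : IsUnit S.det := hdetS.ne'.isUnit
  have hSt : S⁻¹ᵀ = S⁻¹ := by rw [transpose_nonsing_inv, show Sᵀ = S from hS.1]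
  have hdetR : 0 < (A * S⁻¹).det := by
    rw [det_mul, det_nonsing_inv, Ring.inverse_eq_inv']
    positivity
  have hR : A * S⁻¹ ∈ orthogonalGroup n ℝ := by
    rw [mem_orthogonalGroup_iff', transpose_mul, hSt, Matrix.mul_assoc, ← Matrix.mul_assoc Aᵀ,
      ← hSS, Matrix.mul_assoc S, mul_nonsing_inv _ hSu, Matrix.mul_one, nonsing_inv_mul _ hSu]
  refine ⟨A * S⁻¹, mem_specialOrthogonalGroup_iff.2 ⟨hR, ?_⟩, S, hS, hSS,
    (nonsing_inv_mul_cancel_right (A := S) A hSu).symm⟩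
  have hdet_sq := congrArg det ((mem_orthogonalGroup_iff' n ℝ).1 hR)
  rw [det_mul, det_transpose, det_one] at hdet_sq
  nlinarith

lemma exists_specialOrthogonal_frobSq_sub_le {A : Matrix n n ℝ} (hA : 0 < A.det) :
    ∃ R ∈ specialOrthogonalGroup n ℝ, frobSq (A - R) ≤ frobSq (Aᵀ * A - 1) := by
  obtain ⟨R, hR, S, hS, hSS, rfl⟩ := exists_polar_decomposition hA
  refine ⟨R, hR, ?_⟩
  rw [← hSS, ← mul_one R, Matrix.mul_assoc, one_mul, ← mul_sub, frobSq_orthogonal_mul hR.1]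
  exact frobSq_sub_one_le_frobSq_mul_self_sub_one hS

end Polar

lemma dist2SO_le_frobSq (A : Matrix (Fin 3) (Fin 3) ℝ) {R : Matrix (Fin 3) (Fin 3) ℝ}
    (hR : R ∈ SO3) : dist2SO A ≤ frobSq (A - R) := by
  refine csInf_le ⟨0, ?_⟩ ⟨R, hR, (Real.sq_sqrt (frobSq_nonneg _)).symm⟩
  rintro _ ⟨R', -, rfl⟩
  positivity

lemma one_mem_SO3 : (1 : Matrix (Fin 3) (Fin 3) ℝ) ∈ SO3 :=
  one_mem (specialOrthogonalGroup (Fin 3) ℝ)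

lemma dotProduct_self_w (i : Fin 6) : w i ⬝ᵥ w i = 1 := by
  have := Real.sq_sqrt (show (0 : ℝ) ≤ 3 by norm_num)
  have := Real.sq_sqrt (show (0 : ℝ) ≤ 6 by norm_num)
  fin_cases i <;> simp only [w, dotProduct, Fin.sum_univ_three, Fin.reduceFinMk, cons_val] <;> grind

lemma sum_w_dotProduct_mulVec (M : Matrix (Fin 3) (Fin 3) ℝ) :
    ∑ i, w i ⬝ᵥ M *ᵥ w i = 2 * M.trace := by
  have := Real.sq_sqrt (show (0 : ℝ) ≤ 3 by norm_num)
  have := Real.sq_sqrt (show (0 : ℝ) ≤ 6 by norm_num)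
  simp only [w, dotProduct, mulVec, trace, diag, Fin.sum_univ_three, Fin.sum_univ_six, cons_val]
  grind

/-- The pairs `(0, 4)`, `(1, 5)`, `(2, 3)` are opposite, hence orthogonal, edges. In the frame of
the cube circumscribing the tetrahedron the six edges are `(eₐ ± e_b)/√2`, and the identity can be
read off there. -/
lemma two_mul_sum_sq_w_dotProduct_mulVec {E : Matrix (Fin 3) (Fin 3) ℝ} (hE : E.IsSymm) :
    let q := fun i => w i ⬝ᵥ E *ᵥ w i
    2 * ∑ i, q i ^ 2 = frobSq E + E.trace ^ 2 +
      ((q 0 - q 4) ^ 2 + (q 1 - q 5) ^ 2 + (q 2 - q 3) ^ 2) / 2 := by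
  have := Real.sq_sqrt (show (0 : ℝ) ≤ 3 by norm_num)
  have := Real.sq_sqrt (show (0 : ℝ) ≤ 6 by norm_num)
  have h01 : E 1 0 = E 0 1 := hE.apply _ _
  have h02 : E 2 0 = E 0 2 := hE.apply _ _
  have h12 : E 2 1 = E 1 2 := hE.apply _ _
  simp only [w, frobSq, dotProduct, mulVec, trace, diag, Fin.sum_univ_three, Fin.sum_univ_six,
    cons_val, h01, h02, h12]
  grind

lemma frobSq_le_two_mul_sum_sq_w_dotProduct_mulVec {E : Matrix (Fin 3) (Fin 3) ℝ}
    (hE : E.IsSymm) : frobSq E ≤ 2 * ∑ i, (w i ⬝ᵥ E *ᵥ w i) ^ 2 := by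
  rw [two_mul_sum_sq_w_dotProduct_mulVec hE, add_assoc]
  exact le_add_of_nonneg_right (by positivity)

lemma enorm3_mulVec_sq (A : Matrix (Fin 3) (Fin 3) ℝ) (v : Fin 3 → ℝ) :
    enorm3 (A *ᵥ v) ^ 2 = v ⬝ᵥ (Aᵀ * A) *ᵥ v := by
  rw [enorm3, Real.sq_sqrt (by positivity), ← mulVec_mulVec, dotProduct_mulVec, vecMul_transpose]
  simp only [dotProduct, sq]

lemma enorm3_mulVec_w_sq_sub_one (A : Matrix (Fin 3) (Fin 3) ℝ) (i : Fin 6) :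
    enorm3 (A *ᵥ w i) ^ 2 - 1 = w i ⬝ᵥ (Aᵀ * A - 1) *ᵥ w i := by
  rw [enorm3_mulVec_sq, sub_mulVec, one_mulVec, dotProduct_sub, dotProduct_self_w]

lemma sum_enorm3_mulVec_w_sq (A : Matrix (Fin 3) (Fin 3) ℝ) :
    ∑ i, enorm3 (A *ᵥ w i) ^ 2 = 2 * frobSq A := by
  simp only [enorm3_mulVec_sq, sum_w_dotProduct_mulVec, frobSq_eq_trace]

lemma frobSq_transpose_mul_self_sub_one_le (A : Matrix (Fin 3) (Fin 3) ℝ) :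
    frobSq (Aᵀ * A - 1) ≤ 2 * ∑ i, (enorm3 (A *ᵥ w i) ^ 2 - 1) ^ 2 := by
  simp only [enorm3_mulVec_w_sq_sub_one]
  refine frobSq_le_two_mul_sum_sq_w_dotProduct_mulVec ?_
  simp [IsSymm, transpose_sub]

lemma sq_sq_sub_one_le {x : ℝ} (hx : 0 ≤ x) (hx4 : x ^ 2 ≤ 16) :
    (x ^ 2 - 1) ^ 2 ≤ 25 * (x - 1) ^ 2 := by
  have h : (x + 1) ^ 2 ≤ 25 := by nlinarith
  calc (x ^ 2 - 1) ^ 2 = (x + 1) ^ 2 * (x - 1) ^ 2 := by ring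
    _ ≤ 25 * (x - 1) ^ 2 := by gcongr

lemma dist2SO_le_of_frobSq_le {A : Matrix (Fin 3) (Fin 3) ℝ} (hA : 0 < A.det)
    (hA8 : frobSq A ≤ 8) : dist2SO A ≤ 50 * ∑ i, (enorm3 (A *ᵥ w i) - 1) ^ 2 := by
  obtain ⟨R, hR, hAR⟩ := exists_specialOrthogonal_frobSq_sub_le hA
  have hbound (i : Fin 6) : enorm3 (A *ᵥ w i) ^ 2 ≤ 16 := by
    have hsum := sum_enorm3_mulVec_w_sq A
    have hi := Finset.single_le_sum (fun j _ => sq_nonneg (enorm3 (A *ᵥ w j))) (Finset.mem_univ i)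
    linarith
  calc dist2SO A ≤ frobSq (A - R) := dist2SO_le_frobSq A hR
    _ ≤ frobSq (Aᵀ * A - 1) := hAR
    _ ≤ 2 * ∑ i, (enorm3 (A *ᵥ w i) ^ 2 - 1) ^ 2 := frobSq_transpose_mul_self_sub_one_le A
    _ ≤ 2 * ∑ i, 25 * (enorm3 (A *ᵥ w i) - 1) ^ 2 := by
      gcongr with i
      exact sq_sq_sub_one_le (Real.sqrt_nonneg _) (hbound i)
    _ = 50 * ∑ i, (enorm3 (A *ᵥ w i) - 1) ^ 2 := by rw [← Finset.mul_sum]; ring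

lemma dist2SO_le_of_lt_frobSq {A : Matrix (Fin 3) (Fin 3) ℝ} (hA8 : 8 < frobSq A) :
    dist2SO A ≤ 50 * ∑ i, (enorm3 (A *ᵥ w i) - 1) ^ 2 := by
  calc dist2SO A ≤ frobSq (A - 1) := dist2SO_le_frobSq A one_mem_SO3
    _ ≤ 2 * frobSq A + 2 * 3 := by simpa [frobSq_one] using frobSq_sub_le A 1
    _ ≤ 50 * ∑ i, (enorm3 (A *ᵥ w i) ^ 2 / 2 - 1) := by
      rw [Finset.sum_sub_distrib, ← Finset.sum_div, sum_enorm3_mulVec_w_sq]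
      simp only [Finset.sum_const, Finset.card_univ, Fintype.card_fin, nsmul_eq_mul]
      linarith
    _ ≤ 50 * ∑ i, (enorm3 (A *ᵥ w i) - 1) ^ 2 := by
      gcongr with i
      nlinarith [sq_nonneg (enorm3 (A *ᵥ w i) - 2)]

/-- Rigidity estimate for the regular tetrahedron: there is `C₁ > 0` such that for every
linear map `A` with `det A > 0`, `dist²(A, SO(3)) ≤ C₁ ∑ᵢ (|A wᵢ| − 1)²`. -/
theorem tetrahedron_rigidity :
    ∃ C₁ > (0 : ℝ), ∀ A : Matrix (Fin 3) (Fin 3) ℝ, A.det > 0 →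
      dist2SO A ≤ C₁ * ∑ i : Fin 6, (enorm3 (A.mulVec (w i)) - 1) ^ 2 := by
  refine ⟨50, by norm_num, fun A hA => ?_⟩
  rcases le_or_gt (frobSq A) 8 with hA8 | hA8
  · exact dist2SO_le_of_frobSq_le hA hA8
  · exact dist2SO_le_of_lt_frobSq hA8
end

section
/- There exist α > 0 and c_1 > 12√2 such that whenever a tetrahedron has all edge lengths a_i ∈ (1, 1+α) (i = 1,…,6), we have Σ_{i=1}^6 (a_i − 1) ≤ c_1 · (V(a) − V_1), where V(a) is the volume of the tetrahedron and V_1 = √2/12 is the volume of the regular unit tetrahedron. Consequently also Σ_{i=1}^6 (a_i − 1)² ≤ c_1 · α · (V(a) − V_1). -/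
/-- Cayley–Menger matrix of a tetrahedron with edge lengths
`a 0, a 1, a 2` (the edges meeting at one vertex) and
`a 3, a 4, a 5` (the respectively opposite edges). -/
noncomputable def cmMatrix (a : Fin 6 → ℝ) : Matrix (Fin 5) (Fin 5) ℝ :=
  !![0,      1,      1,      1,      1;
     1,      0,      a 0^2,  a 1^2,  a 2^2;
     1,      a 0^2,  0,      a 5^2,  a 4^2;
     1,      a 1^2,  a 5^2,  0,      a 3^2;
     1,      a 2^2,  a 4^2,  a 3^2,  0]

/-- The volume of a tetrahedron as a function of its six edge lengths,
via the Cayley–Menger determinant: `288 V² = det(CM)`. -/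
noncomputable def tetraVol (a : Fin 6 → ℝ) : ℝ :=
  Real.sqrt ((cmMatrix a).det / 288)

/-
Write `x i = a i ^ 2 - 1`. The Cayley–Menger determinant is `4 + 2 ∑ x i` plus terms of degree two
and three, which group into nonnegative face and opposite-edge contributions and the negative
diagonal part `-2 ∑ x i ^ 2 (1 + x (i + 3))`; for small `x` this gives `det ≥ 4 + ∑ x i`, hence
`V ≥ √2 / 12 + ∑ x i / 72`. Since `x i ≥ 2 (a i - 1)`, the linear bound holds with `c₁ = 36`, and the
quadratic one follows from `(a i - 1) ^ 2 ≤ α (a i - 1)`.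
-/

open Finset

def faceTerm (u v w : ℝ) : ℝ := u * v + v * w + w * u - u * v * w

lemma faceTerm_nonneg {u v w : ℝ} (hu : 0 ≤ u) (hv : 0 ≤ v) (hw : 0 ≤ w) (hw₁ : w ≤ 1) :
    0 ≤ faceTerm u v w := by
  unfold faceTerm
  nlinarith [mul_nonneg (mul_nonneg hu hv) (sub_nonneg.2 hw₁), mul_nonneg hv hw, mul_nonneg hw hu]

/-- Edge `i + 3` is opposite to edge `i`, and the faces are `{0, 1, 5}, {0, 2, 4}, {1, 2, 3}, {3, 4, 5}`. -/
theorem cmMatrix_det_eq (a x : Fin 6 → ℝ) (hx : ∀ i, a i ^ 2 = 1 + x i) :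
    (cmMatrix a).det =
      4 + 2 * ∑ i, x i - 2 * ∑ i, x i ^ 2 * (1 + x (i + 3))
        + 2 * (faceTerm (x 0) (x 1) (x 5) + faceTerm (x 0) (x 2) (x 4)
          + faceTerm (x 1) (x 2) (x 3) + faceTerm (x 3) (x 4) (x 5))
        + 2 * (x 0 * x 3 * (x 1 + x 2 + x 4 + x 5) + x 1 * x 4 * (x 0 + x 2 + x 3 + x 5)
          + x 2 * x 5 * (x 0 + x 1 + x 3 + x 4)) := by
  rw [cmMatrix, Matrix.det_succ_row_zero]
  simp only [Fin.sum_univ_succ, Fin.sum_univ_zero, Matrix.det_succ_row_zero, hx]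
  simp [Fin.succAbove, Fin.lt_def, faceTerm]
  ring

theorem add_sum_le_cmMatrix_det (a x : Fin 6 → ℝ) (hx : ∀ i, a i ^ 2 = 1 + x i)
    (h₀ : ∀ i, 0 ≤ x i) (h₁ : ∀ i, x i ≤ 1 / 4) :
    4 + ∑ i, x i ≤ (cmMatrix a).det := by
  have hdiag : ∑ i, x i ^ 2 * (1 + x (i + 3)) ≤ (∑ i, x i) / 2 := by
    rw [sum_div]
    exact sum_le_sum fun i _ => by
      nlinarith [mul_nonneg (h₀ i) (h₀ (i + 3)), h₀ i, h₁ i, h₁ (i + 3),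
        mul_le_mul_of_nonneg_left (h₁ i) (mul_nonneg (h₀ i) (h₀ (i + 3)))]
  have hface (i j k : Fin 6) : 0 ≤ faceTerm (x i) (x j) (x k) :=
    faceTerm_nonneg (h₀ i) (h₀ j) (h₀ k) (by linarith [h₁ k])
  have hopposite (i j k l m n : Fin 6) : 0 ≤ x i * x j * (x k + x l + x m + x n) := by
    have := h₀ k; have := h₀ l; have := h₀ m; have := h₀ n
    exact mul_nonneg (mul_nonneg (h₀ i) (h₀ j)) (by linarith)
  rw [cmMatrix_det_eq a x hx]
  linarith [hface 0 1 5, hface 0 2 4, hface 1 2 3, hface 3 4 5, hopposite 0 3 1 2 4 5,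
    hopposite 1 4 0 2 3 5, hopposite 2 5 0 1 3 4]

lemma sqrt_two_div_twelve_add_le {s : ℝ} (hs₀ : 0 ≤ s) (hs₁ : s ≤ 1) :
    √2 / 12 + s / 72 ≤ √((4 + s) / 288) := by
  have h2 : √2 ^ 2 = 2 := Real.sq_sqrt (by norm_num)
  have hlt : √2 < 1.415 := by nlinarith [Real.sqrt_nonneg 2]
  apply Real.le_sqrt_of_sq_le
  nlinarith

theorem sum_sub_one_le_tetraVol_sub (a : Fin 6 → ℝ) (ha : ∀ i, a i ∈ Set.Icc (1 : ℝ) (1 + 1 / 20)) :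
    ∑ i, (a i - 1) ≤ 36 * (tetraVol a - √2 / 12) := by
  have h₀ (i : Fin 6) : 0 ≤ a i ^ 2 - 1 := by nlinarith [(ha i).1]
  have h₁ (i : Fin 6) : a i ^ 2 - 1 ≤ 1 / 8 := by nlinarith [(ha i).1, (ha i).2]
  set s := ∑ i, (a i ^ 2 - 1)
  have hs₁ : s ≤ 1 := by
    calc s ≤ ∑ _i : Fin 6, (1 / 8 : ℝ) := sum_le_sum fun i _ => h₁ i
      _ ≤ 1 := by norm_num
  have hvol : √2 / 12 + s / 72 ≤ tetraVol a :=
    (sqrt_two_div_twelve_add_le (sum_nonneg fun i _ => h₀ i) hs₁).trans <|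
      Real.sqrt_le_sqrt <| div_le_div_of_nonneg_right
        (add_sum_le_cmMatrix_det a _ (fun i => by ring) h₀ fun i => (h₁ i).trans (by norm_num))
        (by norm_num)
  have hlin : ∑ i, (a i - 1) ≤ s / 2 := by
    rw [sum_div]
    exact sum_le_sum fun i _ => by nlinarith [(ha i).1]
  linarith

lemma sum_sq_le_mul_sum {ι : Type*} (s : Finset ι) {f : ι → ℝ} {α : ℝ}
    (hf : ∀ i ∈ s, f i ∈ Set.Icc 0 α) : ∑ i ∈ s, f i ^ 2 ≤ α * ∑ i ∈ s, f i := by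
  rw [mul_sum]
  exact sum_le_sum fun i hi => by nlinarith [(hf i hi).1, (hf i hi).2]

/-- There exist `α > 0` and `c₁ > 12√2` such that for a tetrahedron with all edge
lengths in `(1, 1+α)`, the sum of edge length excesses is bounded by `c₁` times the
volume excess over the regular unit tetrahedron (of volume `√2/12`), and consequently
the sum of squared excesses is bounded by `c₁ α` times the volume excess. -/
theorem tetra_edge_excess_vs_volume_excess :
    ∃ α > (0 : ℝ), ∃ c₁ > 12 * Real.sqrt 2,
      ∀ a : Fin 6 → ℝ, (∀ i, a i ∈ Set.Ioo (1 : ℝ) (1 + α)) →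
        (∑ i, (a i - 1)) ≤ c₁ * (tetraVol a - Real.sqrt 2 / 12) ∧
        (∑ i, (a i - 1) ^ 2) ≤ c₁ * α * (tetraVol a - Real.sqrt 2 / 12) := by
  have hc₁ : 12 * √2 < 36 := by
    nlinarith [Real.sq_sqrt (show (0 : ℝ) ≤ 2 by norm_num), Real.sqrt_nonneg 2]
  refine ⟨1 / 20, by norm_num, 36, hc₁, fun a ha => ?_⟩
  have hlin := sum_sub_one_le_tetraVol_sub a fun i => Set.Ioo_subset_Icc_self (ha i)
  refine ⟨hlin, ?_⟩
  calc ∑ i, (a i - 1) ^ 2 ≤ 1 / 20 * ∑ i, (a i - 1) :=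
        sum_sq_le_mul_sum _ fun i _ => ⟨by linarith [(ha i).1], by linarith [(ha i).2]⟩
    _ ≤ 36 * (1 / 20) * (tetraVol a - √2 / 12) := by linarith
end

section
/- Let f: ℝ² → ℝ² be continuous and piecewise affine with respect to a locally finite triangulation of ℝ², and suppose that on every triangle the (constant) Jacobian A satisfies ⟨v, A v⟩ > 0 for all v ≠ 0. Then f is injective: for x ≠ y, the piecewise linear curve t ↦ f(ty + (1−t)x), whose derivative at every differentiable point forms an acute angle with y − x, satisfies f(x) ≠ f(y). -/
/-!
Write `v = y - x` and `φ t = ⟪f (x + t • v), v⟫`. Just to the right of any `t`, the line stays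
inside one triangle that contains `x + t • v`, where `f` is affine with Jacobian `A`; there `φ`
is affine with slope `⟪v, A v⟫ > 0`. Since `f` is continuous (it is affine on each piece of a
locally finite closed cover), `φ` is a continuous function with positive right derivatives
everywhere, hence strictly increasing, so `φ 0 < φ 1` and `f x ≠ f y`.
-/

open Matrix Set Filter Topology

theorem strictMono_of_hasDerivWithinAt_Ici_pos {φ : ℝ → ℝ} (hφ : Continuous φ)
    (hderiv : ∀ t, ∃ c > 0, HasDerivWithinAt φ c (Ici t) t) : StrictMono φ := by
  have hmono : Monotone φ := fun a b hab => by
    choose c hc hφc using hderiv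
    exact image_le_of_deriv_right_le_deriv_boundary (f' := 0) continuousOn_const
      (fun _ _ => hasDerivWithinAt_const _ _ _) le_rfl hφ.continuousOn
      (fun t _ => hφc t) (fun t _ => (hc t).le) ⟨hab, le_rfl⟩
  intro a b hab
  obtain ⟨c, hc, hφc⟩ := hderiv a
  have hslope : Tendsto (slope φ a) (𝓝[>] a) (𝓝 c) :=
    (hasDerivWithinAt_iff_tendsto_slope' self_notMem_Ioi).1 (hasDerivWithinAt_Ioi_iff_Ici.2 hφc)
  obtain ⟨s, hs_pos, hs⟩ :=
    ((hslope.eventually (lt_mem_nhds hc)).and (Ioo_mem_nhdsGT hab)).exists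
  calc φ a < φ s := by
        rw [slope_def_field] at hs_pos
        exact sub_pos.1 ((div_pos_iff_of_pos_right (sub_pos.2 hs.1)).1 hs_pos)
    _ ≤ φ b := hmono hs.2.le

theorem LocallyFinite.exists_forall_Icc_add_smul_mem {ι E : Type*} [AddCommGroup E] [Module ℝ E]
    [TopologicalSpace E] [ContinuousAdd E] [ContinuousSMul ℝ E] {S : ι → Set E}
    (hlf : LocallyFinite S) (hclosed : ∀ i, IsClosed (S i)) (hconv : ∀ i, Convex ℝ (S i))
    (hcov : ⋃ i, S i = univ) (x v : E) (t : ℝ) :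
    ∃ i, ∃ u > t, ∀ s ∈ Icc t u, x + s • v ∈ S i := by
  have hline : Continuous fun s : ℝ => x + s • v := by fun_prop
  obtain ⟨u, hu_mem, hut⟩ := (((hline.tendsto t).mono_left nhdsWithin_le_nhds).eventually
    (hlf.eventually_subset hclosed (x + t • v))).and (self_mem_nhdsWithin (s := Ioi t)) |>.exists
  obtain ⟨i, hi⟩ := mem_iUnion.1 (hcov.symm ▸ mem_univ (x + u • v))
  have ht : x + t • v ∈ S i := hu_mem hi
  refine ⟨i, u, hut, fun s hs => ?_⟩
  have hmem := (hconv i).add_smul_mem ht (y := (u - t) • v)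
    (by rwa [add_assoc, ← add_smul, add_sub_cancel]) (t := (s - t) / (u - t))
    ⟨div_nonneg (sub_nonneg.2 hs.1) (sub_pos.2 hut).le,
      (div_le_one (sub_pos.2 hut)).2 (by linarith [hs.2])⟩
  rwa [smul_smul, div_mul_cancel₀ _ (sub_pos.2 hut).ne', add_assoc, ← add_smul,
    add_sub_cancel] at hmem

theorem hasDerivWithinAt_Ici_dotProduct_of_eqOn_affine {n : ℕ}
    {f : (Fin n → ℝ) → Fin n → ℝ} {A : Matrix (Fin n) (Fin n) ℝ} {b x v : Fin n → ℝ} {t u : ℝ}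
    (hut : t < u) (hf : ∀ s ∈ Icc t u, f (x + s • v) = A *ᵥ (x + s • v) + b) :
    HasDerivWithinAt (fun s => f (x + s • v) ⬝ᵥ v) (v ⬝ᵥ A *ᵥ v) (Ici t) t := by
  have hline : HasDerivAt (fun s : ℝ => (A *ᵥ (x + s • v) + b) ⬝ᵥ v) (v ⬝ᵥ A *ᵥ v) t := by
    simp only [mulVec_add, mulVec_smul, add_dotProduct, smul_dotProduct, smul_eq_mul,
      dotProduct_comm (A *ᵥ v) v]
    simpa using (((hasDerivAt_id t).mul_const (v ⬝ᵥ A *ᵥ v)).const_add (A *ᵥ x ⬝ᵥ v)).add_const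
      (b ⬝ᵥ v)
  exact hline.hasDerivWithinAt.congr_of_eventuallyEq
    (eventually_of_mem (Icc_mem_nhdsGE hut) fun s hs => by simp only [hf s hs])
    (by simp only [hf t ⟨le_rfl, hut.le⟩])

theorem piecewise_affine_injective_general
    (f : (Fin 2 → ℝ) → (Fin 2 → ℝ))
    (T : Set (Set (Fin 2 → ℝ)))
    (hcov : ⋃₀ T = Set.univ)
    (hlf : LocallyFinite (fun s : T => (s : Set (Fin 2 → ℝ))))
    (htri : ∀ s ∈ T, ∃ p q r : Fin 2 → ℝ,
      s = convexHull ℝ {p, q, r} ∧ (interior s).Nonempty)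
    (haff : ∀ s ∈ T, ∃ (A : Matrix (Fin 2) (Fin 2) ℝ) (b : Fin 2 → ℝ),
      (∀ v : Fin 2 → ℝ, v ≠ 0 → 0 < v ⬝ᵥ A.mulVec v) ∧
      ∀ x ∈ s, f x = A.mulVec x + b) :
    Function.Injective f := by
  have hclosed (s : T) : IsClosed (s : Set (Fin 2 → ℝ)) := by
    obtain ⟨p, q, r, hs, -⟩ := htri s s.2
    exact hs ▸ ((toFinite {p, q, r}).isCompact_convexHull (𝕜 := ℝ)).isClosed
  have hconv (s : T) : Convex ℝ (s : Set (Fin 2 → ℝ)) := by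
    obtain ⟨p, q, r, hs, -⟩ := htri s s.2
    exact hs ▸ convex_convexHull ℝ _
  have hcov_iUnion : ⋃ s : T, (s : Set (Fin 2 → ℝ)) = univ := sUnion_eq_iUnion ▸ hcov
  have hf : Continuous f := hlf.continuous hcov_iUnion hclosed fun s => by
    obtain ⟨A, b, -, hAb⟩ := haff s s.2
    exact ((continuous_const.matrix_mulVec continuous_id).add continuous_const).continuousOn.congr
      hAb
  intro x y hxy
  by_contra hne
  have hv : y - x ≠ 0 := sub_ne_zero.2 (Ne.symm hne)
  have hmono : StrictMono fun t : ℝ => f (x + t • (y - x)) ⬝ᵥ (y - x) := by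
    refine strictMono_of_hasDerivWithinAt_Ici_pos (by fun_prop) fun t => ?_
    obtain ⟨s, u, hut, hmem⟩ :=
      hlf.exists_forall_Icc_add_smul_mem hclosed hconv hcov_iUnion x (y - x) t
    obtain ⟨A, b, hA, hAb⟩ := haff s s.2
    exact ⟨_, hA _ hv,
      hasDerivWithinAt_Ici_dotProduct_of_eqOn_affine hut fun r hr => hAb _ (hmem r hr)⟩
  simpa [hxy] using hmono zero_lt_one

/-- A continuous map `f : ℝ² → ℝ²` which is piecewise affine with respect to a
locally finite triangulation of ℝ², such that on every triangle the constant Jacobian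
`A` satisfies `⟨v, A v⟩ > 0` for all `v ≠ 0`, is injective. -/
theorem piecewise_affine_injective
    (f : (Fin 2 → ℝ) → (Fin 2 → ℝ)) (hf : Continuous f)
    (T : Set (Set (Fin 2 → ℝ)))
    (hcov : ⋃₀ T = Set.univ)
    (hlf : LocallyFinite (fun s : T => (s : Set (Fin 2 → ℝ))))
    (htri : ∀ s ∈ T, ∃ p q r : Fin 2 → ℝ,
      s = convexHull ℝ {p, q, r} ∧ (interior s).Nonempty)
    (haff : ∀ s ∈ T, ∃ (A : Matrix (Fin 2) (Fin 2) ℝ) (b : Fin 2 → ℝ),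
      (∀ v : Fin 2 → ℝ, v ≠ 0 → 0 < v ⬝ᵥ A.mulVec v) ∧
      ∀ x ∈ s, f x = A.mulVec x + b) :
    Function.Injective f :=
  piecewise_affine_injective_general f T hcov hlf htri haff
end

section
/- For α ∈ (0, √3 − 1), the area of a Euclidean triangle with all three side lengths in the interval [1, 1 + α] is uniquely minimized by the equilateral triangle with side length 1, whose area is √3/4. Moreover, at the equilateral unit triangle, each partial derivative of the area with respect to a side length equals 1/(2√3) > 0. -/
/-!
With `x, y, z` the squared side lengths, Heron's radicand is
`2(xy + yz + zx) - x² - y² - z² = 3 + Σ (x - 1)(3 - x) + 2 Σ (x - 1)(y - 1)`.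
If every side lies in `[1, √3)`, then `x, y, z ∈ [1, 3)`, so every summand after the `3` is
nonnegative, and the radicand equals `3` only when `x = y = z = 1`.
-/

/-- The area of a triangle with side lengths `a, b, c` by Heron's formula. -/
noncomputable def heronArea (a b c : ℝ) : ℝ :=
  Real.sqrt ((a + b + c) * (-a + b + c) * (a - b + c) * (a + b - c)) / 4

/-- `16 · area²`, as a polynomial in the squared side lengths `x = a², y = b², z = c²`. -/
def heronRadicand (x y z : ℝ) : ℝ := 2 * (x * y + y * z + z * x) - (x ^ 2 + y ^ 2 + z ^ 2)

lemma heronRadicand_rotate (x y z : ℝ) : heronRadicand y z x = heronRadicand x y z := by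
  unfold heronRadicand; ring

lemma heronRadicand_eq_three_add (x y z : ℝ) :
    heronRadicand x y z = 3 + ((x - 1) * (3 - x) + (y - 1) * (3 - y) + (z - 1) * (3 - z)) +
      2 * ((x - 1) * (y - 1) + (y - 1) * (z - 1) + (z - 1) * (x - 1)) := by
  unfold heronRadicand; ring

lemma heronArea_eq_sqrt_heronRadicand (a b c : ℝ) :
    heronArea a b c = √(heronRadicand (a ^ 2) (b ^ 2) (c ^ 2)) / 4 := by
  rw [heronArea, heronRadicand]
  congr 2
  ring

lemma sub_one_mul_three_sub_le_heronRadicand_sub_three {x y z : ℝ} (hx : x ∈ Set.Icc 1 3)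
    (hy : y ∈ Set.Icc 1 3) (hz : z ∈ Set.Icc 1 3) :
    (x - 1) * (3 - x) ≤ heronRadicand x y z - 3 := by
  obtain ⟨hx1, -⟩ := hx
  obtain ⟨hy1, hy3⟩ := hy
  obtain ⟨hz1, hz3⟩ := hz
  rw [heronRadicand_eq_three_add]
  have := mul_nonneg (sub_nonneg.2 hy1) (sub_nonneg.2 hy3)
  have := mul_nonneg (sub_nonneg.2 hz1) (sub_nonneg.2 hz3)
  have := mul_nonneg (sub_nonneg.2 hx1) (sub_nonneg.2 hy1)
  have := mul_nonneg (sub_nonneg.2 hy1) (sub_nonneg.2 hz1)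
  have := mul_nonneg (sub_nonneg.2 hz1) (sub_nonneg.2 hx1)
  linarith

lemma three_le_heronRadicand {x y z : ℝ} (hx : x ∈ Set.Icc 1 3) (hy : y ∈ Set.Icc 1 3)
    (hz : z ∈ Set.Icc 1 3) : 3 ≤ heronRadicand x y z := by
  have := sub_one_mul_three_sub_le_heronRadicand_sub_three hx hy hz
  have := mul_nonneg (sub_nonneg.2 hx.1) (sub_nonneg.2 hx.2)
  linarith

lemma eq_one_of_heronRadicand_eq_three {x y z : ℝ} (hx : x ∈ Set.Ico 1 3) (hy : y ∈ Set.Icc 1 3)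
    (hz : z ∈ Set.Icc 1 3) (h : heronRadicand x y z = 3) : x = 1 := by
  have hle := sub_one_mul_three_sub_le_heronRadicand_sub_three (Set.Ico_subset_Icc_self hx) hy hz
  rw [h, sub_self] at hle
  linarith [hx.1, nonpos_of_mul_nonpos_left hle (sub_pos.2 hx.2)]

lemma heronRadicand_eq_three_iff {x y z : ℝ} (hx : x ∈ Set.Ico 1 3) (hy : y ∈ Set.Ico 1 3)
    (hz : z ∈ Set.Ico 1 3) : heronRadicand x y z = 3 ↔ x = 1 ∧ y = 1 ∧ z = 1 := by
  have hx' := Set.Ico_subset_Icc_self hx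
  have hy' := Set.Ico_subset_Icc_self hy
  have hz' := Set.Ico_subset_Icc_self hz
  refine ⟨fun h => ⟨?_, ?_, ?_⟩, ?_⟩
  · exact eq_one_of_heronRadicand_eq_three hx hy' hz' h
  · exact eq_one_of_heronRadicand_eq_three hy hz' hx' (by rwa [heronRadicand_rotate])
  · exact eq_one_of_heronRadicand_eq_three hz hx' hy' (by rwa [← heronRadicand_rotate])
  · rintro ⟨rfl, rfl, rfl⟩
    norm_num [heronRadicand]

lemma sq_mem_Ico_one_three {a : ℝ} (h1 : 1 ≤ a) (h3 : a < √3) : a ^ 2 ∈ Set.Ico 1 3 :=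
  ⟨one_le_pow₀ h1, (Real.lt_sqrt (by linarith)).1 h3⟩

theorem hasFDerivAt_heronArea {v : Fin 3 → ℝ}
    (hv : heronRadicand (v 0 ^ 2) (v 1 ^ 2) (v 2 ^ 2) ≠ 0) :
    HasFDerivAt (fun v : Fin 3 → ℝ => heronArea (v 0) (v 1) (v 2))
      ((2 * √(heronRadicand (v 0 ^ 2) (v 1 ^ 2) (v 2 ^ 2)))⁻¹ •
        ∑ i : Fin 3, (v i * (∑ j, v j ^ 2 - 2 * v i ^ 2)) •
          (ContinuousLinearMap.proj i : (Fin 3 → ℝ) →L[ℝ] ℝ)) v := by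
  have h0 := hasFDerivAt_apply (𝕜 := ℝ) (0 : Fin 3) v
  have h1 := hasFDerivAt_apply (𝕜 := ℝ) (1 : Fin 3) v
  have h2 := hasFDerivAt_apply (𝕜 := ℝ) (2 : Fin 3) v
  have hsqrt : HasFDerivAt _ _ v :=
    ((((((h0.pow 2).mul (h1.pow 2)).add ((h1.pow 2).mul (h2.pow 2))).add
      ((h2.pow 2).mul (h0.pow 2))).const_mul 2).sub
      ((((h0.pow 2).pow 2).add ((h1.pow 2).pow 2)).add ((h2.pow 2).pow 2))).sqrt hv
  simp only [heronArea_eq_sqrt_heronRadicand, div_eq_mul_inv]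
  refine (hsqrt.mul_const 4⁻¹).congr_fderiv ?_
  ext w
  simp only [Fin.isValue, Pi.add_apply, Pi.mul_apply, Pi.sub_apply, one_div, mul_inv_rev,
    Nat.add_one_sub_one, pow_one, nsmul_eq_mul, Nat.cast_ofNat, smul_add, smul_apply, sub_apply,
    add_apply, ContinuousLinearMap.proj_apply, smul_eq_mul, heronRadicand, Fin.sum_univ_three]
  ring

/-- For `α ∈ (0, √3 − 1)`, the area of a triangle with all side lengths in
`[1, 1+α]` is uniquely minimized by the equilateral unit triangle (area `√3/4`),
and at the equilateral unit triangle each partial derivative of the area with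
respect to a side length equals `1/(2√3) > 0`. -/
theorem heron_area_min_and_derivative
    (α : ℝ) (hα : α ∈ Set.Ioo (0 : ℝ) (Real.sqrt 3 - 1)) :
    (∀ a b c : ℝ, a ∈ Set.Icc 1 (1 + α) → b ∈ Set.Icc 1 (1 + α) →
      c ∈ Set.Icc 1 (1 + α) → Real.sqrt 3 / 4 ≤ heronArea a b c) ∧
    (∀ a b c : ℝ, a ∈ Set.Icc 1 (1 + α) → b ∈ Set.Icc 1 (1 + α) →
      c ∈ Set.Icc 1 (1 + α) → heronArea a b c = Real.sqrt 3 / 4 →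
      a = 1 ∧ b = 1 ∧ c = 1) ∧
    HasFDerivAt (fun v : Fin 3 → ℝ => heronArea (v 0) (v 1) (v 2))
      ((1 / (2 * Real.sqrt 3)) • (∑ i : Fin 3, ContinuousLinearMap.proj i :
        (Fin 3 → ℝ) →L[ℝ] ℝ)) (fun _ => 1) ∧
    0 < 1 / (2 * Real.sqrt 3) := by
  have hsq {a : ℝ} (ha : a ∈ Set.Icc 1 (1 + α)) : a ^ 2 ∈ Set.Ico 1 3 :=
    sq_mem_Ico_one_three ha.1 (by linarith [ha.2, hα.2])
  have hradicand {a b c : ℝ} (ha : a ∈ Set.Icc 1 (1 + α)) (hb : b ∈ Set.Icc 1 (1 + α))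
      (hc : c ∈ Set.Icc 1 (1 + α)) : 3 ≤ heronRadicand (a ^ 2) (b ^ 2) (c ^ 2) :=
    three_le_heronRadicand (Set.Ico_subset_Icc_self (hsq ha)) (Set.Ico_subset_Icc_self (hsq hb))
      (Set.Ico_subset_Icc_self (hsq hc))
  refine ⟨fun a b c ha hb hc => ?_, fun a b c ha hb hc h => ?_, ?_, by positivity⟩
  · rw [heronArea_eq_sqrt_heronRadicand]
    gcongr
    exact hradicand ha hb hc
  · rw [heronArea_eq_sqrt_heronRadicand, div_left_inj' four_ne_zero,
      Real.sqrt_inj (by linarith [hradicand ha hb hc]) (by norm_num),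
      heronRadicand_eq_three_iff (hsq ha) (hsq hb) (hsq hc)] at h
    have eq_one {a : ℝ} (ha : a ∈ Set.Icc 1 (1 + α)) : a ^ 2 = 1 → a = 1 :=
      (pow_eq_one_iff_of_nonneg (by linarith [ha.1]) two_ne_zero).1
    exact ⟨eq_one ha h.1, eq_one hb h.2.1, eq_one hc h.2.2⟩
  · refine (hasFDerivAt_heronArea (v := fun _ => 1) (by norm_num [heronRadicand])).congr_fderiv ?_
    ext w
    norm_num [heronRadicand, Fin.sum_univ_three]
end

section
/- Let X ⊂ ℝ² be a locally finite point set with pairwise distances > 1 such that every point has exactly six points of X in its open annulus of radii 1 and 1+α, with α > 0 small enough. Then the graph K(X) on vertex set X with edges between points at distance in (1, 1+α) is connected. -/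
/-!
Greedy routing. Take `x ≠ y` in `X` and the unit vector `u` from `x` towards `y`. The six
neighbours of `x` are pairwise more than `1` apart and have norm barely above `1`, so seen
from `x` their directions are pairwise at angle more than `0.9`; if none lay within distance
`1` of `x + u`, all six directions would also be at angle more than `0.9` from `u`, and six
such directions do not fit into the remaining arc of length `2π - 1.8 < 5 · 0.9`. A neighbour
`z` with `‖z - (x + u)‖ < 1` is strictly closer to `y` than `x`, and by local finiteness
greedy steps towards `y` reach `y`.
-/

open Complex ComplexConjugate Real

lemma exists_ne_abs_sub_lt_of_ncard_lt {ι : Type*} {S : Set ι} {f : ι → ℝ} {a δ : ℝ} {n : ℕ}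
    (hδ : 0 < δ) (hS : n < S.ncard) (hf : ∀ i ∈ S, f i ∈ Set.Ico a (a + n * δ)) :
    ∃ i ∈ S, ∃ j ∈ S, i ≠ j ∧ |f i - f j| < δ := by
  have hnonneg : ∀ i ∈ S, 0 ≤ (f i - a) / δ := fun i hi =>
    div_nonneg (sub_nonneg.2 (hf i hi).1) hδ.le
  have hmaps : ∀ i ∈ S, ⌊(f i - a) / δ⌋₊ ∈ Set.Iio n := fun i hi => by
    rw [Set.mem_Iio, Nat.floor_lt (hnonneg i hi), div_lt_iff₀ hδ]
    linarith [(hf i hi).2]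
  obtain ⟨i, hi, j, hj, hij, hfloor⟩ :=
    Set.exists_ne_map_eq_of_ncard_lt_of_maps_to (by simpa using hS) hmaps
  refine ⟨i, hi, j, hj, hij, ?_⟩
  have hi₁ := Nat.floor_le (hnonneg i hi)
  have hi₂ := Nat.lt_floor_add_one ((f i - a) / δ)
  have hj₁ := Nat.floor_le (hnonneg j hj)
  have hj₂ := Nat.lt_floor_add_one ((f j - a) / δ)
  rw [hfloor] at hi₁ hi₂
  have : |(f i - a) / δ - (f j - a) / δ| < 1 := abs_sub_lt_iff.2 ⟨by linarith, by linarith⟩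
  rwa [← sub_div, sub_sub_sub_cancel_right, abs_div, abs_of_pos hδ, div_lt_one hδ] at this

lemma cos_nine_tenths_gt : 0.55 < Real.cos 0.9 := by
  have h := (abs_le.1 (Real.cos_bound (x := 0.9) (by norm_num [abs_of_pos]))).1
  norm_num [abs_of_pos] at h ⊢
  linarith

lemma Complex.cos_arg_sub_arg {a b : ℂ} (ha : a ≠ 0) (hb : b ≠ 0) :
    Real.cos (arg a - arg b) = (a * conj b).re / (‖a‖ * ‖b‖) := by
  rw [Real.cos_sub, cos_arg ha, cos_arg hb, sin_arg, sin_arg]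
  have ha' : ‖a‖ ≠ 0 := norm_ne_zero_iff.2 ha
  have hb' : ‖b‖ ≠ 0 := norm_ne_zero_iff.2 hb
  simp only [mul_re, conj_re, conj_im]
  field_simp
  ring

/- Measuring angles by `arg (-w)`, i.e. from the direction `-1`, puts the forbidden direction
`1` at the cut `±π`, so the six angles lie in one interval and no wrap-around occurs. -/
lemma abs_arg_neg_lt_of_one_le_norm_sub_one {w : ℂ} (hw : ‖w‖ ∈ Set.Ioo 1 1.01)
    (hfar : 1 ≤ ‖w - 1‖) : |arg (-w)| < π - 0.9 := by
  have hw0 : w ≠ 0 := norm_pos_iff.1 (by linarith [hw.1])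
  have hre : 2 * w.re ≤ ‖w‖ ^ 2 := by
    have := Complex.normSq_sub w 1
    rw [← Complex.sq_norm, ← Complex.sq_norm] at this
    simp only [map_one, mul_one] at this
    nlinarith
  have hcos : Real.cos (π - 0.9) < Real.cos (arg (-w)) := by
    rw [Real.cos_pi_sub, cos_arg (neg_ne_zero.2 hw0), norm_neg, neg_re, neg_div, neg_lt_neg_iff,
      div_lt_iff₀ (by linarith [hw.1])]
    nlinarith [cos_nine_tenths_gt, hw.1, hw.2]
  rw [← Real.cos_abs (arg (-w))] at hcos
  exact (strictAntiOn_cos.lt_iff_gt ⟨by linarith [pi_gt_three], by linarith⟩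
    ⟨abs_nonneg _, abs_arg_le_pi _⟩).1 hcos

lemma le_abs_arg_neg_sub_arg_neg {w w' : ℂ} (hw : ‖w‖ ∈ Set.Ioo 1 1.01)
    (hw' : ‖w'‖ ∈ Set.Ioo 1 1.01) (hsep : 1 < ‖w - w'‖) : 0.9 ≤ |arg (-w) - arg (-w')| := by
  have hw0 : w ≠ 0 := norm_pos_iff.1 (by linarith [hw.1])
  have hw0' : w' ≠ 0 := norm_pos_iff.1 (by linarith [hw'.1])
  have hre : 2 * (w * conj w').re < ‖w‖ ^ 2 + ‖w'‖ ^ 2 - 1 := by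
    have := Complex.normSq_sub w w'
    rw [← Complex.sq_norm, ← Complex.sq_norm, ← Complex.sq_norm] at this
    nlinarith
  have hcos : Real.cos (arg (-w) - arg (-w')) < Real.cos 0.9 := by
    rw [cos_arg_sub_arg (neg_ne_zero.2 hw0) (neg_ne_zero.2 hw0'), norm_neg, norm_neg, map_neg,
      neg_mul_neg, div_lt_iff₀ (by nlinarith [hw.1, hw'.1])]
    nlinarith [cos_nine_tenths_gt, hw.1, hw.2, hw'.1, hw'.2,
      mul_pos (sub_pos.2 hw.1) (sub_pos.2 hw'.1)]
  by_contra! hclose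
  rw [← Real.cos_abs] at hcos
  exact hcos.not_ge (cos_le_cos_of_nonneg_of_le_pi (abs_nonneg _) (by linarith [pi_gt_three])
    hclose.le)

lemma exists_norm_sub_one_lt_one {S : Set ℂ} (hS : 6 ≤ S.ncard)
    (hnorm : ∀ w ∈ S, ‖w‖ ∈ Set.Ioo 1 1.01)
    (hsep : S.Pairwise fun w w' => 1 < ‖w - w'‖) : ∃ w ∈ S, ‖w - 1‖ < 1 := by
  by_contra! hfar
  have hangle : ∀ w ∈ S, arg (-w) ∈ Set.Ico (-(π - 0.9)) (-(π - 0.9) + (5 : ℕ) * 0.9) := by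
    intro w hw
    have := abs_lt.1 (abs_arg_neg_lt_of_one_le_norm_sub_one (hnorm w hw) (hfar w hw))
    constructor <;> linarith [pi_lt_d2]
  obtain ⟨w, hw, w', hw', hne, hclose⟩ :=
    exists_ne_abs_sub_lt_of_ncard_lt (by norm_num) (by omega) hangle
  exact hclose.not_ge (le_abs_arg_neg_sub_arg_neg (hnorm w hw) (hnorm w' hw') (hsep hw hw' hne))

lemma exists_norm_sub_add_lt_one {S : Set ℂ} {x u : ℂ} (hu : ‖u‖ = 1) (hS : 6 ≤ S.ncard)
    (hnorm : ∀ z ∈ S, ‖z - x‖ ∈ Set.Ioo 1 1.01) (hsep : S.Pairwise fun z z' => 1 < ‖z - z'‖) :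
    ∃ z ∈ S, ‖z - (x + u)‖ < 1 := by
  have hu0 : u ≠ 0 := norm_ne_zero_iff.1 (by rw [hu]; exact one_ne_zero)
  have hinj : Function.Injective fun z => (z - x) / u := fun a b h =>
    sub_left_injective ((div_left_inj' hu0).1 h)
  obtain ⟨_, ⟨z, hz, rfl⟩, hclose⟩ :=
    exists_norm_sub_one_lt_one (S := (fun z => (z - x) / u) '' S)
      (by rwa [Set.ncard_image_of_injective S hinj])
      (by rintro _ ⟨z, hz, rfl⟩; simpa [hu] using hnorm z hz)
      (hinj.injOn.pairwise_image.2 fun z hz z' hz' hne => by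
        simpa [Function.onFun, ← sub_div, hu] using hsep hz hz' hne)
  refine ⟨z, hz, ?_⟩
  rwa [← div_self hu0, ← sub_div, norm_div, hu, div_one, sub_sub] at hclose

lemma norm_sub_lt_of_norm_sub_normalize_lt {E : Type*} [NormedAddCommGroup E] [NormedSpace ℝ E]
    {v w : E} (hv : 1 ≤ ‖v‖) (hw : ‖w - ‖v‖⁻¹ • v‖ < 1) : ‖w - v‖ < ‖v‖ := by
  have hnormalize : ‖‖v‖⁻¹ • v - v‖ = ‖v‖ - 1 := by
    rw [show ‖v‖⁻¹ • v - v = (‖v‖⁻¹ - 1) • v by rw [sub_smul, one_smul], norm_smul,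
      Real.norm_of_nonpos (by linarith [inv_le_one_of_one_le₀ hv]), neg_sub, sub_mul, one_mul,
      inv_mul_cancel₀ (by linarith)]
  calc ‖w - v‖ ≤ ‖w - ‖v‖⁻¹ • v‖ + ‖‖v‖⁻¹ • v - v‖ := norm_sub_le_norm_sub_add_norm_sub _ _ _
    _ < ‖v‖ := by linarith

lemma exists_neighbor_closer {α : ℝ} (hα : α ≤ 1 / 100) {X : Set ℂ}
    (hX : X.Pairwise fun a b => 1 < ‖a - b‖) {x y : ℂ}
    (hsix : {z ∈ X | ‖z - x‖ ∈ Set.Ioo (1 : ℝ) (1 + α)}.ncard = 6) (hxy : 1 ≤ ‖y - x‖) :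
    ∃ z ∈ X, ‖z - x‖ ∈ Set.Ioo (1 : ℝ) (1 + α) ∧ ‖z - y‖ < ‖x - y‖ := by
  set u : ℂ := ‖y - x‖⁻¹ • (y - x)
  have hu : ‖u‖ = 1 := by
    rw [norm_smul, norm_inv, norm_norm, inv_mul_cancel₀ (by linarith)]
  obtain ⟨z, ⟨hzX, hzx⟩, hclose⟩ := exists_norm_sub_add_lt_one hu hsix.ge
    (fun z hz => ⟨hz.2.1, by linarith [hz.2.2]⟩) (hX.mono fun _ hz => hz.1)
  refine ⟨z, hzX, hzx, ?_⟩
  rw [norm_sub_rev x, ← sub_sub_sub_cancel_right z y x]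
  exact norm_sub_lt_of_norm_sub_normalize_lt hxy (by rwa [sub_sub])

theorem Relation.reflTransGen_of_exists_dist_lt {E : Type*} [PseudoMetricSpace E] {X : Set E}
    {r : E → E → Prop} {y : E} (hX : ∀ s, Bornology.IsBounded s → (X ∩ s).Finite)
    (hstep : ∀ x ∈ X, x ≠ y → ∃ z ∈ X, r x z ∧ dist z y < dist x y) {x : E} (hx : x ∈ X) :
    ReflTransGen r x y := by
  induction hn : (X ∩ Metric.ball y (dist x y)).ncard using Nat.strong_induction_on
    generalizing x with
  | _ n ih =>
  obtain rfl | hxy := eq_or_ne x y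
  · rfl
  obtain ⟨z, hz, hxz, hzy⟩ := hstep x hx hxy
  have hsub : X ∩ Metric.ball y (dist z y) ⊂ X ∩ Metric.ball y (dist x y) :=
    ⟨Set.inter_subset_inter_right _ (Metric.ball_subset_ball hzy.le),
      fun h => (h ⟨hz, Metric.mem_ball.2 hzy⟩).2.out.false⟩
  exact .head hxz (ih _ (hn ▸ Set.ncard_lt_ncard hsub (hX _ Metric.isBounded_ball)) hz rfl)

/-- Connectivity of the neighbor graph `K(X)`: if `X ⊂ ℝ²` is locally finite with
pairwise distances `> 1` and every point of `X` has exactly six points of `X` in its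
open annulus of radii `1` and `1+α` (with `α > 0` small enough), then any two points
of `X` are joined by a path along edges of length in `(1, 1+α)`. -/
theorem neighbor_graph_connected :
    ∃ α₀ > (0 : ℝ), ∀ α ∈ Set.Ioo (0 : ℝ) α₀, ∀ X : Set ℂ,
      (∀ s : Set ℂ, Bornology.IsBounded s → (X ∩ s).Finite) →
      (∀ x ∈ X, ∀ y ∈ X, x ≠ y → 1 < ‖x - y‖) →
      (∀ x ∈ X, ({y ∈ X | ‖y - x‖ ∈ Set.Ioo (1 : ℝ) (1 + α)}).ncard = 6) →
      ∀ x ∈ X, ∀ y ∈ X,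
        Relation.ReflTransGen
          (fun a b => a ∈ X ∧ b ∈ X ∧ ‖a - b‖ ∈ Set.Ioo (1 : ℝ) (1 + α))
          x y := by
  refine ⟨1 / 100, by norm_num, fun α hα X hloc hpair hsix x hx y hy => ?_⟩
  refine Relation.reflTransGen_of_exists_dist_lt hloc (fun a ha hay => ?_) hx
  obtain ⟨z, hz, haz, hzy⟩ := exists_neighbor_closer hα.2.le (fun a ha b hb => hpair a ha b hb)
    (hsix a ha) (hpair y hy a ha hay.symm).le
  refine ⟨z, hz, ⟨ha, hz, by rwa [norm_sub_rev]⟩, ?_⟩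
  simpa only [dist_eq_norm] using hzy
end
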